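/- arXiv:2404.02182 — 3 statements merged into one kernel-verified Lean document; each statement's English description precedes it below -/
import Mathlib

section
/- If z : ℝ → ℝ is a positive function with z(β) → 0 and β·z(β) → 0 as β → ∞, then z(β)·∑_{j ≥ ⌈β⌉} e^{-j·z(β)} → 1 and z(β)²·∑_{j ≥ ⌈β⌉} (j+1)·e^{-j·z(β)} → 1 as β → +∞. -/
/-!
Put `r = e^{-z}` and `N = ⌈β⌉`. Both series are shifted geometric series, with sums
`r^N / (1 - r)` and `r^N (r / (1 - r)^2 + (N + 1) / (1 - r))`. After multiplying by `z`
resp. `z^2` they are expressions in `z / (1 - e^{-z}) → 1`, `r → 1`, `N z → 0` and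
`r^N = e^{-N z} → 1`, and both limits equal `1`.
-/
open Filter Topology Real

section GeometricShift

variable {𝕜 : Type*} [NormedField 𝕜] {r : 𝕜}

lemma hasSum_geometric_add_of_norm_lt_one (hr : ‖r‖ < 1) (N : ℕ) :
    HasSum (fun j : ℕ => r ^ (j + N)) (r ^ N / (1 - r)) := by
  simpa [pow_add, div_eq_mul_inv, mul_comm] using
    (hasSum_geometric_of_norm_lt_one hr).mul_right (r ^ N)

lemma hasSum_succ_mul_geometric_add_of_norm_lt_one (hr : ‖r‖ < 1) (N : ℕ) :
    HasSum (fun j : ℕ => (((j + N : ℕ) : 𝕜) + 1) * r ^ (j + N))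
      (r ^ N * (r / (1 - r) ^ 2 + (N + 1) / (1 - r))) := by
  have h := ((hasSum_coe_mul_geometric_of_norm_lt_one hr).add
    ((hasSum_geometric_of_norm_lt_one hr).mul_left ((N : 𝕜) + 1))).mul_left (r ^ N)
  have hterm (j : ℕ) :
      r ^ N * (j * r ^ j + (N + 1) * r ^ j) = (((j + N : ℕ) : 𝕜) + 1) * r ^ (j + N) := by
    push_cast
    ring
  simpa only [hterm, ← div_eq_mul_inv] using h

end GeometricShift

lemma tendsto_div_one_sub_exp_neg : Tendsto (fun t => t / (1 - exp (-t))) (𝓝[≠] 0) (𝓝 1) := by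
  have hderiv : HasDerivAt (fun t => 1 - exp (-t)) 1 0 := by
    simpa using ((hasDerivAt_neg (0 : ℝ)).exp).const_sub 1
  simpa [slope_def_field, inv_div] using (hasDerivAt_iff_tendsto_slope.mp hderiv).inv₀ one_ne_zero

lemma tendsto_natCeil_mul_of_tendsto_mul {f : ℝ → ℝ} (hf : Tendsto f atTop (𝓝 0))
    (hxf : Tendsto (fun x => x * f x) atTop (𝓝 0)) :
    Tendsto (fun x => (⌈x⌉₊ : ℝ) * f x) atTop (𝓝 0) := by
  have hfrac : Tendsto (fun x => (⌈x⌉₊ - x) * f x) atTop (𝓝 0) := by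
    refine squeeze_zero_norm' ?_ (by simpa using hf.norm)
    filter_upwards [eventually_ge_atTop 0] with x hx
    rw [norm_mul]
    refine mul_le_of_le_one_left (norm_nonneg _) ?_
    rw [Real.norm_of_nonneg (by linarith [Nat.le_ceil x])]
    linarith [Nat.ceil_lt_add_one hx]
  simpa [sub_mul] using hxf.add hfrac

theorem stmt8 (z : ℝ → ℝ) (hz : ∀ β, 0 < z β)
    (hz0 : Tendsto z atTop (nhds 0))
    (hβz : Tendsto (fun β => β * z β) atTop (nhds 0)) :
    Tendsto (fun β : ℝ =>
        z β * ∑' j : ℕ, Real.exp (-((j + ⌈β⌉₊ : ℕ) : ℝ) * z β)) atTop (nhds 1) ∧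
    Tendsto (fun β : ℝ =>
        (z β) ^ 2 * ∑' j : ℕ,
          (((j + ⌈β⌉₊ : ℕ) : ℝ) + 1) * Real.exp (-((j + ⌈β⌉₊ : ℕ) : ℝ) * z β))
      atTop (nhds 1) := by
  have hratio : Tendsto (fun β => z β / (1 - exp (-z β))) atTop (𝓝 1) :=
    tendsto_div_one_sub_exp_neg.comp
      (tendsto_nhdsWithin_iff.mpr ⟨hz0, .of_forall fun β => (hz β).ne'⟩)
  have hNz := tendsto_natCeil_mul_of_tendsto_mul hz0 hβz
  have hr : Tendsto (fun β => exp (-z β)) atTop (𝓝 1) := by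
    simpa using hz0.neg.rexp
  have hrN : Tendsto (fun β => exp (-z β) ^ ⌈β⌉₊) atTop (𝓝 1) := by
    simp_rw [← exp_nat_mul, mul_neg]
    simpa using hNz.neg.rexp
  have hexp (β : ℝ) (n : ℕ) : exp (-(n : ℝ) * z β) = exp (-z β) ^ n := by
    rw [neg_mul, ← mul_neg, exp_nat_mul]
  have hr_lt_one (β : ℝ) : ‖exp (-z β)‖ < 1 := by
    rw [norm_of_nonneg (exp_pos _).le, exp_lt_one_iff, neg_lt_zero]
    exact hz β
  simp_rw [hexp, (hasSum_geometric_add_of_norm_lt_one (hr_lt_one _) _).tsum_eq,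
    (hasSum_succ_mul_geometric_add_of_norm_lt_one (hr_lt_one _) _).tsum_eq]
  constructor
  · convert hrN.mul hratio using 2 <;> ring
  · convert hrN.mul ((hr.mul (hratio.pow 2)).add ((hNz.add hz0).mul hratio)) using 2 with β
    · -- align `(1 - r)⁻¹ ^ 2` with `((1 - r) ^ 2)⁻¹` before `ring`, which expands inside `⁻¹`
      rw [div_pow]
      ring
    · norm_num
end

section
/- Let X be a compact metric space, T : X → X continuous, and A : X → ℝ continuous. If μ_β is an equilibrium state for β·A + B_β (i.e., it maximizes ν ↦ h_ν(T) + ∫(β·A + B_β)dν over T-invariant probability measures ν), where B_β converges uniformly to a continuous function B, and μ_∞ is a weak* accumulation point of μ_β as β → +∞, then ∫ A dμ_∞ = max over T-invariant probabilities ν of ∫ A dν; that is, μ_∞ is an A-maximizing measure. -/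
/-!
Comparing the equilibrium state `μ β` with an invariant `ν` in the variational principle gives
`β (∫ A dν - ∫ A dμ_β) ≤ h (μ β) - h ν + ∫ B_β dμ_β - ∫ B_β dν`. The right-hand side is bounded
uniformly in large `β`: `h` is upper semicontinuous on the compact space of probability measures,
hence bounded above, and the `B_β` are eventually uniformly bounded. So `∫ A dμ_β` exceeds
`∫ A dν - C / β`, and this passes to the weak* cluster point `μ∞` because `ρ ↦ ∫ A dρ` is
continuous. Invariance of `μ∞` holds because invariant measures form a closed set.
-/

open Filter MeasureTheory Set

lemma MeasureTheory.ProbabilityMeasure.isClosed_setOf_map_eq_self {X : Type*}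
    [PseudoMetricSpace X] [MeasurableSpace X] [BorelSpace X] {T : X → X} (hT : Continuous T) :
    IsClosed {ν : ProbabilityMeasure X | ν.toMeasure.map T = ν.toMeasure} := by
  have hset : {ν : ProbabilityMeasure X | ν.toMeasure.map T = ν.toMeasure} =
      {ν | ν.map hT.measurable.aemeasurable = ν} := by
    ext ν
    simp [← ProbabilityMeasure.toMeasure_injective.eq_iff]
  rw [hset]
  exact isClosed_eq (ProbabilityMeasure.continuous_map hT) continuous_id

lemma TendstoUniformly.eventually_forall_norm_le_add {ι α E : Type*} [SeminormedAddCommGroup E]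
    {l : Filter ι} {F : ι → α → E} {f : α → E} (hF : TendstoUniformly F f l) {K ε : ℝ}
    (hf : ∀ x, ‖f x‖ ≤ K) (hε : 0 < ε) : ∀ᶠ i in l, ∀ x, ‖F i x‖ ≤ K + ε := by
  filter_upwards [Metric.tendstoUniformly_iff.mp hF ε hε] with i hi x
  have hdist : ‖F i x - f x‖ < ε := by rw [← dist_eq_norm, dist_comm]; exact hi x
  linarith [norm_le_norm_add_norm_sub' (F i x) (f x), hf x]

lemma abs_integral_le_of_forall_abs_le {Ω : Type*} [MeasurableSpace Ω] {μ : Measure Ω}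
    [IsProbabilityMeasure μ] {f : Ω → ℝ} {C : ℝ} (hf : ∀ x, |f x| ≤ C) : |∫ x, f x ∂μ| ≤ C := by
  simpa [Real.norm_eq_abs] using
    norm_integral_le_of_norm_le_const (μ := μ) (f := f) (C := C) (.of_forall hf)

lemma mul_sub_integral_le_of_free_energy_le {Ω : Type*} [MeasurableSpace Ω] {ν μ : Measure Ω}
    {f g : Ω → ℝ} (hfν : Integrable f ν) (hfμ : Integrable f μ) (hgν : Integrable g ν)
    (hgμ : Integrable g μ) {a b β : ℝ}
    (h : a + ∫ x, (β * f x + g x) ∂ν ≤ b + ∫ x, (β * f x + g x) ∂μ) :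
    β * (∫ x, f x ∂ν - ∫ x, f x ∂μ) ≤ b - a + ∫ x, g x ∂μ - ∫ x, g x ∂ν := by
  rw [integral_add (hfν.const_mul β) hgν, integral_add (hfμ.const_mul β) hgμ,
    integral_const_mul, integral_const_mul] at h
  linarith

lemma le_of_mapClusterPt_of_eventually_mul_sub_le {u : ℝ → ℝ} {a L C : ℝ}
    (hu : MapClusterPt L atTop u) (h : ∀ᶠ β in atTop, β * (a - u β) ≤ C) : a ≤ L := by
  refine le_of_forall_pos_le_add fun ε hε => ?_
  have hu_ge : ∀ᶠ β in atTop, u β ∈ Ici (a - ε) := by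
    filter_upwards [h, eventually_gt_atTop (max 0 (C / ε))] with β hβ hβC
    have hβ0 : 0 < β := (le_max_left _ _).trans_lt hβC
    have hCβ : C < β * ε := (div_lt_iff₀ hε).mp ((le_max_right _ _).trans_lt hβC)
    have hgap : a - u β < ε := lt_of_mul_lt_mul_left (hβ.trans_lt hCβ) hβ0.le
    exact mem_Ici.2 (by linarith)
  linarith [mem_Ici.1 (isClosed_Ici.mem_of_mapClusterPt hu hu_ge)]

theorem stmt12_general {X : Type*} [MetricSpace X] [CompactSpace X]
    [MeasurableSpace X] [BorelSpace X]
    (T : X → X) (hT : Continuous T)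
    (A B : X → ℝ) (hA : Continuous A) (hB : Continuous B)
    (Bfam : ℝ → X → ℝ) (hBfam : ∀ β, Continuous (Bfam β))
    (hconv : TendstoUniformly Bfam B atTop)
    (h : ProbabilityMeasure X → ℝ) (husc : UpperSemicontinuous h)
    (μ : ℝ → ProbabilityMeasure X)
    (hinv : ∀ β, (μ β).toMeasure.map T = (μ β).toMeasure)
    (heq : ∀ β : ℝ, ∀ ν : ProbabilityMeasure X,
      ν.toMeasure.map T = ν.toMeasure →
      h ν + ∫ x, (β * A x + Bfam β x) ∂ν.toMeasure
        ≤ h (μ β) + ∫ x, (β * A x + Bfam β x) ∂(μ β).toMeasure)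
    (μinf : ProbabilityMeasure X)
    (hacc : MapClusterPt μinf atTop μ) :
    μinf.toMeasure.map T = μinf.toMeasure ∧
    ∀ ν : ProbabilityMeasure X, ν.toMeasure.map T = ν.toMeasure →
      ∫ x, A x ∂ν.toMeasure ≤ ∫ x, A x ∂μinf.toMeasure := by
  refine ⟨(ProbabilityMeasure.isClosed_setOf_map_eq_self hT).mem_of_mapClusterPt hacc
    (.of_forall hinv), fun ν hν => ?_⟩
  have hint : ∀ {f : X → ℝ}, Continuous f → ∀ ρ : ProbabilityMeasure X, Integrable f ρ :=
    fun hf _ => hf.integrable_of_hasCompactSupport (.of_compactSpace _)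
  obtain ⟨M, hM⟩ : BddAbove (range h) := by
    simpa using (husc.upperSemicontinuousOn univ).bddAbove_of_isCompact isCompact_univ
  set K := ‖(⟨B, hB⟩ : C(X, ℝ))‖
  have hBfam_le : ∀ᶠ β in atTop, ∀ x, |Bfam β x| ≤ K + 1 :=
    hconv.eventually_forall_norm_le_add (ContinuousMap.norm_coe_le_norm ⟨B, hB⟩) one_pos
  have hA_cont : Continuous fun ρ : ProbabilityMeasure X => ∫ x, A x ∂ρ :=
    ProbabilityMeasure.continuous_integral_continuousMap (⟨A, hA⟩ : C(X, ℝ))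
  refine le_of_mapClusterPt_of_eventually_mul_sub_le (C := M - h ν + 2 * (K + 1))
    (hacc.continuousAt_comp (f := fun ρ : ProbabilityMeasure X => ∫ x, A x ∂ρ)
      hA_cont.continuousAt) ?_
  filter_upwards [hBfam_le] with β hβ
  have hgap := mul_sub_integral_le_of_free_energy_le (hint hA ν) (hint hA (μ β))
    (hint (hBfam β) ν) (hint (hBfam β) (μ β)) (heq β ν hν)
  have hBν := abs_le.mp (abs_integral_le_of_forall_abs_le (μ := ν.toMeasure) hβ)
  have hBμ := abs_le.mp (abs_integral_le_of_forall_abs_le (μ := (μ β).toMeasure) hβ)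
  have hhμ := hM (mem_range_self (μ β))
  simp only [Function.comp_apply]
  linarith

theorem stmt12 {X : Type*} [MetricSpace X] [CompactSpace X] [Nonempty X]
    [MeasurableSpace X] [BorelSpace X]
    (T : X → X) (hT : Continuous T)
    (A B : X → ℝ) (hA : Continuous A) (hB : Continuous B)
    (Bfam : ℝ → X → ℝ) (hBfam : ∀ β, Continuous (Bfam β))
    (hconv : TendstoUniformly Bfam B atTop)
    (h : ProbabilityMeasure X → ℝ) (husc : UpperSemicontinuous h)
    (μ : ℝ → ProbabilityMeasure X)
    (hinv : ∀ β, (μ β).toMeasure.map T = (μ β).toMeasure)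
    (heq : ∀ β : ℝ, ∀ ν : ProbabilityMeasure X,
      ν.toMeasure.map T = ν.toMeasure →
      h ν + ∫ x, (β * A x + Bfam β x) ∂ν.toMeasure
        ≤ h (μ β) + ∫ x, (β * A x + Bfam β x) ∂(μ β).toMeasure)
    (μinf : ProbabilityMeasure X)
    (hacc : MapClusterPt μinf atTop μ) :
    μinf.toMeasure.map T = μinf.toMeasure ∧
    ∀ ν : ProbabilityMeasure X, ν.toMeasure.map T = ν.toMeasure →
      ∫ x, A x ∂ν.toMeasure ≤ ∫ x, A x ∂μinf.toMeasure :=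
  stmt12_general T hT A B hA hB Bfam hBfam hconv h husc μ hinv heq μinf hacc
end

section
/- Let X ⊆ {0,1,...,d}^ℕ be a subshift of finite type with shift σ, and A : X → ℝ Lipschitz, non-positive, with m(A) = 0 (sup of ∫A dν over invariant ν equals 0). Define the Mañé potential S(x,y) = lim_{ε→0} sup{ S_n(A)(z) : σⁿ(z) = y, d(x,z) < ε, n ≥ 1 } where S_n(A) = A + A∘σ + ... + A∘σ^{n-1}. Then for all x, y, z ∈ X, S(x,y) + S(y,z) ≤ S(x,z). -/
/-!
Orbit segments can be concatenated. Take `w` with `σⁿ w = y` close to `x`, and `u` with `σᵏ u = z`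
that agrees with `y` on its first `L` symbols. The sequence `v` reading `w` for `n` symbols and then `u`
is admissible once `L` exceeds the length of every forbidden word, `σ^(n+k) v = z`, and, `d` being an
ultrametric, `v` is as close to `x` as `w`. Since `σⁱ v` and `σⁱ w` agree on `n + L - i` symbols, the
Lipschitz property bounds `S_n(A)(w) - S_n(A)(v)` by the geometric tail `C θ^L / (1 - θ)`. Hence
`S(x,y) + S(y,z)` exceeds the supremum defining `S(x,z)` at scale `ε` by at most this tail, which
vanishes as `L → ∞`.
-/

open Filter MeasureTheory Classical

/-- The left shift on one-sided sequences. -/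
def shift {m : ℕ} (x : ℕ → Fin m) : ℕ → Fin m := fun n => x (n + 1)

/-- The metric `d(x,y) = θ^{min{i : x_i ≠ y_i}}` on sequence space. -/
noncomputable def shiftDist (θ : ℝ) {m : ℕ} (x y : ℕ → Fin m) : ℝ :=
  if x = y then 0 else θ ^ sInf {i : ℕ | x i ≠ y i}

/-- The Birkhoff sum `S_n(A) = A + A∘σ + ... + A∘σ^{n-1}`. -/
noncomputable def birkhoff {m : ℕ} (A : (ℕ → Fin m) → ℝ) (n : ℕ) (x : ℕ → Fin m) : ℝ :=
  ∑ i ∈ Finset.range n, A (shift^[i] x)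

/-- The Mañé potential
`S(x,y) = lim_{ε→0} sup {S_n(A)(z) : σⁿ(z) = y, d(x,z) < ε, n ≥ 1, z ∈ X}`,
with values in the extended reals. -/
noncomputable def manePotential {m : ℕ} (θ : ℝ) (X : Set (ℕ → Fin m))
    (A : (ℕ → Fin m) → ℝ) (x y : ℕ → Fin m) : EReal :=
  ⨅ (ε : ℝ) (_ : 0 < ε),
    sSup {v : EReal | ∃ n : ℕ, 1 ≤ n ∧ ∃ z ∈ X,
      shift^[n] z = y ∧ shiftDist θ x z < ε ∧ v = (birkhoff A n z : EReal)}

/-- `X` is a subshift of finite type: the sequences avoiding a finite set of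
forbidden words. -/
def IsSFT {m : ℕ} (X : Set (ℕ → Fin m)) : Prop :=
  ∃ F : Set (List (Fin m)), F.Finite ∧
    X = {x | ∀ (i l : ℕ), List.ofFn (fun j : Fin l => x (i + j)) ∉ F}

/-- `m(A) = 0`: the supremum of `∫ A dν` over shift-invariant probability
measures giving full mass to `X` is zero. -/
def MaxIntegralZero {m : ℕ} (X : Set (ℕ → Fin m)) (A : (ℕ → Fin m) → ℝ) : Prop :=
  sSup {r : ℝ | ∃ ν : Measure (ℕ → Fin m), IsProbabilityMeasure ν ∧
    ν.map shift = ν ∧ ν X = 1 ∧ r = ∫ x, A x ∂ν} = 0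

section Sequences

variable {m : ℕ}

lemma shift_iterate_apply (x : ℕ → Fin m) (n j : ℕ) : shift^[n] x j = x (j + n) := by
  induction n generalizing x with
  | zero => rfl
  | succ n ih => rw [Function.iterate_succ_apply, ih]; rfl

lemma shiftDist_nonneg {θ : ℝ} (hθ : 0 ≤ θ) (x y : ℕ → Fin m) : 0 ≤ shiftDist θ x y := by
  unfold shiftDist
  split_ifs <;> positivity

lemma shiftDist_le_pow_iff {θ : ℝ} (hθ0 : 0 < θ) (hθ1 : θ < 1) {x y : ℕ → Fin m} {k : ℕ} :
    shiftDist θ x y ≤ θ ^ k ↔ ∀ i < k, x i = y i := by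
  unfold shiftDist
  split_ifs with hxy
  · simp [hxy, pow_nonneg hθ0.le]
  · rw [pow_le_pow_iff_right_of_lt_one₀ hθ0 hθ1]
    refine ⟨fun hk i hi => not_not.1 (Nat.notMem_of_lt_sInf (hi.trans_le hk)), fun h => ?_⟩
    by_contra! hlt
    exact Nat.sInf_mem (Function.ne_iff.1 hxy) (h _ hlt)

lemma shiftDist_le_max {θ : ℝ} (hθ0 : 0 ≤ θ) (hθ1 : θ ≤ 1) (x y z : ℕ → Fin m) :
    shiftDist θ x z ≤ max (shiftDist θ x y) (shiftDist θ y z) := by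
  by_cases hxz : x = z
  · rw [hxz, shiftDist, if_pos rfl]
    exact le_max_of_le_left (shiftDist_nonneg hθ0 _ _)
  set N := sInf {i | x i ≠ z i}
  have hN : x N ≠ z N := Nat.sInf_mem (Function.ne_iff.1 hxz)
  have pow_le : ∀ a b : ℕ → Fin m, a N ≠ b N → θ ^ N ≤ shiftDist θ a b := fun a b hab => by
    rw [shiftDist, if_neg fun h => hab (congrFun h N)]
    exact pow_le_pow_of_le_one hθ0 hθ1 (Nat.sInf_le hab)
  rw [shiftDist, if_neg hxz]
  by_cases hxy : x N = y N
  · exact le_max_of_le_right (pow_le y z (hxy ▸ hN))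
  · exact le_max_of_le_left (pow_le x y hxy)

def splice (n : ℕ) (w u : ℕ → Fin m) : ℕ → Fin m := fun i => if i < n then w i else u (i - n)

lemma shift_iterate_splice (n : ℕ) (w u : ℕ → Fin m) : shift^[n] (splice n w u) = u := by
  funext j
  simp [shift_iterate_apply, splice]

lemma splice_apply_of_agree {n L : ℕ} {w u : ℕ → Fin m} (h : ∀ j < L, shift^[n] w j = u j)
    {i : ℕ} (hi : i < n + L) : splice n w u i = w i := by
  unfold splice
  split_ifs with hin
  · rfl
  · rw [← h (i - n) (by omega), shift_iterate_apply, Nat.sub_add_cancel (not_lt.1 hin)]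

end Sequences

section SFT

variable {m : ℕ} {X : Set (ℕ → Fin m)}

lemma IsSFT.mapsTo_shift (hX : IsSFT X) : Set.MapsTo shift X X := by
  obtain ⟨F, -, rfl⟩ := hX
  intro x hx i l
  simpa [shift, Nat.add_right_comm] using hx (i + 1) l

lemma IsSFT.exists_splice_mem (hX : IsSFT X) :
    ∃ ℓ, ∀ w ∈ X, ∀ u ∈ X, ∀ n, (∀ j < ℓ, shift^[n] w j = u j) → splice n w u ∈ X := by
  obtain ⟨F, hF, rfl⟩ := hX
  obtain ⟨ℓ, hℓ⟩ := (hF.image List.length).bddAbove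
  refine ⟨ℓ, fun w hw u hu n hwu i l hmem => ?_⟩
  have hl : l ≤ ℓ := by simpa using hℓ (Set.mem_image_of_mem _ hmem)
  by_cases hin : n ≤ i
  · refine hu (i - n) l ?_
    convert hmem using 2
    funext j
    simp only [splice, if_neg (show ¬i + j < n by omega)]
    congr 1
    omega
  · refine hw i l ?_
    convert hmem using 2
    funext j
    rw [splice_apply_of_agree hwu (by omega)]

end SFT

section Birkhoff

variable {m : ℕ}

lemma birkhoff_add (A : (ℕ → Fin m) → ℝ) (n k : ℕ) (x : ℕ → Fin m) :
    birkhoff A (n + k) x = birkhoff A n x + birkhoff A k (shift^[n] x) := by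
  unfold birkhoff
  rw [Finset.sum_range_add]
  congr 1
  refine Finset.sum_congr rfl fun i _ => ?_
  rw [← Function.iterate_add_apply, Nat.add_comm i n]

lemma birkhoff_le_add_of_agree {θ C : ℝ} (hθ0 : 0 < θ) (hθ1 : θ < 1) {X : Set (ℕ → Fin m)}
    (hX : Set.MapsTo shift X X) {A : (ℕ → Fin m) → ℝ} (hC : 0 ≤ C)
    (hA : ∀ x ∈ X, ∀ y ∈ X, |A x - A y| ≤ C * shiftDist θ x y)
    {w v : ℕ → Fin m} (hw : w ∈ X) (hv : v ∈ X) {n L : ℕ} (hwv : ∀ i < n + L, w i = v i) :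
    birkhoff A n w ≤ birkhoff A n v + C * θ ^ L / (1 - θ) := by
  have hterm : ∀ i < n, A (shift^[i] w) - A (shift^[i] v) ≤ C * θ ^ L * θ ^ (n - 1 - i) := by
    intro i hi
    have hdist : shiftDist θ (shift^[i] w) (shift^[i] v) ≤ θ ^ (L + (n - 1 - i)) :=
      (shiftDist_le_pow_iff hθ0 hθ1).2 fun j hj => by
        simp only [shift_iterate_apply]
        exact hwv _ (by omega)
    calc A (shift^[i] w) - A (shift^[i] v)
        ≤ C * shiftDist θ (shift^[i] w) (shift^[i] v) :=
          (le_abs_self _).trans (hA _ (hX.iterate i hw) _ (hX.iterate i hv))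
      _ ≤ C * θ ^ L * θ ^ (n - 1 - i) := by
          rw [mul_assoc, ← pow_add]
          gcongr
  have hgeom : ∑ i ∈ Finset.range n, θ ^ (n - 1 - i) ≤ 1 / (1 - θ) := by
    rw [Finset.sum_range_reflect (θ ^ ·) n, Finset.range_eq_Ico]
    simpa using geom_sum_Ico_le_of_lt_one (m := 0) (n := n) hθ0.le hθ1
  calc birkhoff A n w
      = birkhoff A n v + ∑ i ∈ Finset.range n, (A (shift^[i] w) - A (shift^[i] v)) := by
        simp [birkhoff, Finset.sum_sub_distrib]
    _ ≤ birkhoff A n v + ∑ i ∈ Finset.range n, C * θ ^ L * θ ^ (n - 1 - i) := by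
        gcongr with i hi
        exact hterm i (Finset.mem_range.1 hi)
    _ ≤ birkhoff A n v + C * θ ^ L * (1 / (1 - θ)) := by
        rw [← Finset.mul_sum]
        gcongr
    _ = birkhoff A n v + C * θ ^ L / (1 - θ) := by ring

end Birkhoff

lemma EReal.sSup_add_sSup_le {S T : Set EReal} {c : EReal} (h : ∀ a ∈ S, ∀ b ∈ T, a + b ≤ c) :
    sSup S + sSup T ≤ c :=
  EReal.add_le_of_forall_lt fun a' ha' b' hb' => by
    obtain ⟨a, ha, ha'a⟩ := lt_sSup_iff.1 ha'
    obtain ⟨b, hb, hb'b⟩ := lt_sSup_iff.1 hb'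
    exact (add_le_add ha'a.le hb'b.le).trans (h a ha b hb)

lemma EReal.le_of_forall_pos_le_add {a b : EReal} (h : ∀ δ : ℝ, 0 < δ → a ≤ b + δ) : a ≤ b := by
  induction b with
  | bot => simpa using h 1 one_pos
  | top => exact le_top
  | coe r =>
    induction a with
    | bot => exact bot_le
    | top =>
      have h1 := h 1 one_pos
      rw [top_le_iff, ← EReal.coe_add] at h1
      exact absurd h1 (EReal.coe_ne_top _)
    | coe s =>
      refine EReal.coe_le_coe_iff.2 (_root_.le_of_forall_pos_le_add fun δ hδ => ?_)
      exact_mod_cast h δ hδ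

section Mane

variable {m : ℕ}

def maneSet (θ : ℝ) (X : Set (ℕ → Fin m)) (A : (ℕ → Fin m) → ℝ) (x y : ℕ → Fin m) (ε : ℝ) :
    Set EReal :=
  {v : EReal | ∃ n : ℕ, 1 ≤ n ∧ ∃ z ∈ X,
    shift^[n] z = y ∧ shiftDist θ x z < ε ∧ v = (birkhoff A n z : EReal)}

lemma manePotential_eq_iInf (θ : ℝ) (X : Set (ℕ → Fin m)) (A : (ℕ → Fin m) → ℝ)
    (x y : ℕ → Fin m) : manePotential θ X A x y = ⨅ (ε : ℝ) (_ : 0 < ε), sSup (maneSet θ X A x y ε) :=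
  rfl

lemma sSup_maneSet_add_sSup_maneSet_le {θ C ε : ℝ} (hθ0 : 0 < θ) (hθ1 : θ < 1)
    {X : Set (ℕ → Fin m)} (hX : Set.MapsTo shift X X) {A : (ℕ → Fin m) → ℝ} (hC : 0 ≤ C)
    (hA : ∀ x ∈ X, ∀ y ∈ X, |A x - A y| ≤ C * shiftDist θ x y) {L : ℕ}
    (hsplice : ∀ w ∈ X, ∀ u ∈ X, ∀ n, (∀ j < L, shift^[n] w j = u j) → splice n w u ∈ X)
    (hLε : θ ^ L < ε) (x y z : ℕ → Fin m) :
    sSup (maneSet θ X A x y ε) + sSup (maneSet θ X A y z (θ ^ L)) ≤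
      sSup (maneSet θ X A x z ε) + (C * θ ^ L / (1 - θ) : ℝ) := by
  refine EReal.sSup_add_sSup_le ?_
  rintro _ ⟨n, -, w, hw, rfl, hxw, rfl⟩ _ ⟨k, hk, u, hu, rfl, hwu, rfl⟩
  have hagree : ∀ j < L, shift^[n] w j = u j := (shiftDist_le_pow_iff hθ0 hθ1).1 hwu.le
  set v := splice n w u
  have hwv : ∀ i < n + L, w i = v i := fun i hi => (splice_apply_of_agree hagree hi).symm
  have hxv : shiftDist θ x v < ε := by
    have hwv' : shiftDist θ w v < ε :=
      calc shiftDist θ w v ≤ θ ^ (n + L) := (shiftDist_le_pow_iff hθ0 hθ1).2 hwv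
        _ ≤ θ ^ L := pow_le_pow_of_le_one hθ0.le hθ1.le (Nat.le_add_left L n)
        _ < ε := hLε
    exact (shiftDist_le_max hθ0.le hθ1.le x w v).trans_lt (max_lt hxw hwv')
  have hmem : (birkhoff A (n + k) v : EReal) ∈ maneSet θ X A x (shift^[k] u) ε :=
    ⟨n + k, by omega, v, hsplice w hw u hu n hagree,
      by rw [Nat.add_comm, Function.iterate_add_apply, shift_iterate_splice], hxv, rfl⟩
  have hsum : birkhoff A n w + birkhoff A k u ≤ birkhoff A (n + k) v + C * θ ^ L / (1 - θ) := by
    rw [birkhoff_add, shift_iterate_splice]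
    linarith [birkhoff_le_add_of_agree hθ0 hθ1 hX hC hA hw (hsplice w hw u hu n hagree) hwv]
  calc (birkhoff A n w : EReal) + birkhoff A k u
      = ((birkhoff A n w + birkhoff A k u : ℝ) : EReal) := (EReal.coe_add _ _).symm
    _ ≤ ((birkhoff A (n + k) v + C * θ ^ L / (1 - θ) : ℝ) : EReal) := EReal.coe_le_coe_iff.2 hsum
    _ = (birkhoff A (n + k) v : EReal) + (C * θ ^ L / (1 - θ) : ℝ) := EReal.coe_add _ _
    _ ≤ _ := by
        gcongr
        exact le_sSup hmem

end Mane

theorem stmt15_general (d : ℕ) (θ : ℝ) (hθ0 : 0 < θ) (hθ1 : θ < 1)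
    (X : Set (ℕ → Fin (d + 1))) (hSFT : IsSFT X)
    (A : (ℕ → Fin (d + 1)) → ℝ)
    (hALip : ∃ C : ℝ, ∀ x ∈ X, ∀ y ∈ X, |A x - A y| ≤ C * shiftDist θ x y) :
    ∀ x ∈ X, ∀ y ∈ X, ∀ z ∈ X,
      manePotential θ X A x y + manePotential θ X A y z ≤ manePotential θ X A x z := by
  obtain ⟨ℓ, hsplice⟩ := hSFT.exists_splice_mem
  obtain ⟨C, hC, hA⟩ : ∃ C, 0 ≤ C ∧ ∀ x ∈ X, ∀ y ∈ X, |A x - A y| ≤ C * shiftDist θ x y := by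
    obtain ⟨C₀, hA₀⟩ := hALip
    refine ⟨max C₀ 0, le_max_right _ _, fun x hx y hy => (hA₀ x hx y hy).trans ?_⟩
    exact mul_le_mul_of_nonneg_right (le_max_left _ _) (shiftDist_nonneg hθ0.le _ _)
  intro x _ y _ z _
  rw [manePotential_eq_iInf θ X A x z]
  refine le_iInf₂ fun ε hε => EReal.le_of_forall_pos_le_add fun δ hδ => ?_
  have hpow := tendsto_pow_atTop_nhds_zero_of_lt_one hθ0.le hθ1
  have htail : Tendsto (fun L : ℕ => C * θ ^ L / (1 - θ)) atTop (nhds 0) := by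
    simpa using (hpow.const_mul C).div_const (1 - θ)
  obtain ⟨L, hℓL, hLε, hLδ⟩ := ((eventually_ge_atTop ℓ).and
    ((hpow.eventually_lt_const hε).and (htail.eventually_lt_const hδ))).exists
  calc manePotential θ X A x y + manePotential θ X A y z
      ≤ sSup (maneSet θ X A x y ε) + sSup (maneSet θ X A y z (θ ^ L)) :=
        add_le_add (iInf₂_le ε hε) (iInf₂_le _ (pow_pos hθ0 L))
    _ ≤ sSup (maneSet θ X A x z ε) + (C * θ ^ L / (1 - θ) : ℝ) :=
        sSup_maneSet_add_sSup_maneSet_le hθ0 hθ1 hSFT.mapsTo_shift hC hA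
          (fun w hw u hu n h => hsplice w hw u hu n fun j hj => h j (hj.trans_le hℓL)) hLε x y z
    _ ≤ sSup (maneSet θ X A x z ε) + δ := add_le_add le_rfl (EReal.coe_le_coe_iff.2 hLδ.le)

theorem stmt15 (d : ℕ) (θ : ℝ) (hθ0 : 0 < θ) (hθ1 : θ < 1)
    (X : Set (ℕ → Fin (d + 1))) (hXc : IsClosed X)
    (hXinv : ∀ x ∈ X, shift x ∈ X) (hSFT : IsSFT X)
    (A : (ℕ → Fin (d + 1)) → ℝ)
    (hALip : ∃ C : ℝ, ∀ x ∈ X, ∀ y ∈ X, |A x - A y| ≤ C * shiftDist θ x y)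
    (hAneg : ∀ x ∈ X, A x ≤ 0)
    (hmA : MaxIntegralZero X A) :
    ∀ x ∈ X, ∀ y ∈ X, ∀ z ∈ X,
      manePotential θ X A x y + manePotential θ X A y z ≤ manePotential θ X A x z :=
  stmt15_general d θ hθ0 hθ1 X hSFT A hALip
end
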